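/- Let G be an undirected bipartite graph on parts [n] ⊔ [n] with biadjacency matrix M. Then the number of permutations on G (viewing G as a symmetric digraph) equals Σ_{S,S' ⊆ [n], |S|=|S'|} per(M(S,S'))^2. -/

import Mathlib

/-
A permutation on the bipartite graph fixes every vertex that it does not send to a neighbour,
which lies on the other side. So it is the same thing as a set `S` of moved left vertices, a set
`S'` of moved right vertices and two bijections `S → S'`, `S' → S` along edges, and every such
quadruple gives a permutation on the graph. For a 0/1 matrix, `per M(S,S')` counts the bijections
`S → S'` along edges, and, through inversion, also those `S' → S`; so the pair `(S, S')`
contributes `per M(S,S')²`, which vanishes unless `|S| = |S'|`.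
-/

open Finset

/-- The permanent of the submatrix of `M` with rows `S` and columns `S'`. -/
def subPer {n : ℕ} (M : Matrix (Fin n) (Fin n) ℕ) (S S' : Finset (Fin n)) : ℕ :=
  ∑ e : {x // x ∈ S} ≃ {x // x ∈ S'}, ∏ i : {x // x ∈ S}, M i (e i)

open Function Sum

variable {α β : Type*}

lemma exists_equiv_of_forall_exists {γ : Type*} {S : Finset α} {T : Finset β} {F : α → γ}
    {b : β → γ} (hF : Injective F) (hb : Injective b) (hST : ∀ i ∈ S, ∃ j ∈ T, F i = b j)
    (hTS : ∀ j ∈ T, ∃ i ∈ S, F i = b j) :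
    ∃ e : S ≃ T, ∀ i : S, F i = b (e i) := by
  choose g hgT hg using hST
  refine ⟨.ofBijective (fun i => ⟨g i i.2, hgT i i.2⟩) ⟨fun i i' h => ?_, fun j => ?_⟩,
    fun i => hg i i.2⟩
  · exact Subtype.ext <| hF <|
      (hg i i.2).trans <| (congrArg (fun j : T => b j) h).trans (hg i' i'.2).symm
  · obtain ⟨i, hi, hij⟩ := hTS j j.2
    exact ⟨⟨i, hi⟩, Subtype.ext <| hb <| (hg i hi).symm.trans hij⟩

namespace Equiv.Perm

lemma exists_apply_inl_eq_inr {σ : Perm (α ⊕ β)}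
    (hr : ∀ j, σ (inr j) = inr j ∨ ∃ i, σ (inr j) = inl i) {j : β} (hj : σ (inr j) ≠ inr j) :
    ∃ i, σ (inl i) = inr j := by
  obtain ⟨i | j', hv⟩ := σ.surjective (inr j)
  · exact ⟨i, hv⟩
  · rcases hr j' with hfix | ⟨i, hi⟩
    · obtain rfl := inr_injective (hfix.symm.trans hv)
      exact absurd hfix hj
    · exact absurd (hi.symm.trans hv) inl_ne_inr

lemma exists_apply_inr_eq_inl {σ : Perm (α ⊕ β)}
    (hl : ∀ i, σ (inl i) = inl i ∨ ∃ j, σ (inl i) = inr j) {i : α} (hi : σ (inl i) ≠ inl i) :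
    ∃ j, σ (inr j) = inl i := by
  obtain ⟨i' | j, hv⟩ := σ.surjective (inl i)
  · rcases hl i' with hfix | ⟨j, hj⟩
    · obtain rfl := inl_injective (hfix.symm.trans hv)
      exact absurd hfix hi
    · exact absurd (hj.symm.trans hv) inr_ne_inl
  · exact ⟨j, hv⟩

variable [DecidableEq α] [DecidableEq β] {S : Finset α} {T : Finset β}

def swapSides (e : S ≃ T) (f : T ≃ S) : Perm (α ⊕ β) where
  toFun := Sum.elim (fun i => if h : i ∈ S then inr (e ⟨i, h⟩ : β) else inl i)
    (fun j => if h : j ∈ T then inl (f ⟨j, h⟩ : α) else inr j)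
  invFun := Sum.elim (fun i => if h : i ∈ S then inr (f.symm ⟨i, h⟩ : β) else inl i)
    (fun j => if h : j ∈ T then inl (e.symm ⟨j, h⟩ : α) else inr j)
  left_inv := by
    rintro (i | j)
    · by_cases h : i ∈ S <;> simp [h]
    · by_cases h : j ∈ T <;> simp [h]
  right_inv := by
    rintro (i | j)
    · by_cases h : i ∈ S <;> simp [h]
    · by_cases h : j ∈ T <;> simp [h]

@[simp]
lemma swapSides_inl (e : S ≃ T) (f : T ≃ S) (i : α) :
    swapSides e f (inl i) = if h : i ∈ S then inr (e ⟨i, h⟩ : β) else inl i := rfl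

@[simp]
lemma swapSides_inr (e : S ≃ T) (f : T ≃ S) (j : β) :
    swapSides e f (inr j) = if h : j ∈ T then inl (f ⟨j, h⟩ : α) else inr j := rfl

lemma swapSides_inl_coe (e : S ≃ T) (f : T ≃ S) (i : S) :
    swapSides e f (inl i) = inr (e i : β) := by
  simp

lemma swapSides_inr_coe (e : S ≃ T) (f : T ≃ S) (j : T) :
    swapSides e f (inr j) = inl (f j : α) := by
  simp

lemma swapSides_inl_eq_self_iff (e : S ≃ T) (f : T ≃ S) (i : α) :
    swapSides e f (inl i) = inl i ↔ i ∉ S := by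
  by_cases h : i ∈ S <;> simp [h]

lemma swapSides_inr_eq_self_iff (e : S ≃ T) (f : T ≃ S) (j : β) :
    swapSides e f (inr j) = inr j ↔ j ∉ T := by
  by_cases h : j ∈ T <;> simp [h]

lemma swapSides_injective :
    Injective fun d : Σ (S : Finset α) (T : Finset β), (S ≃ T) × (T ≃ S) =>
      swapSides d.2.2.1 d.2.2.2 := by
  rintro ⟨S, T, e, f⟩ ⟨S', T', e', f'⟩ h
  simp only at h
  obtain rfl : S = S' := by
    ext i
    rw [← not_iff_not, ← swapSides_inl_eq_self_iff e f, ← swapSides_inl_eq_self_iff e' f', h]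
  obtain rfl : T = T' := by
    ext j
    rw [← not_iff_not, ← swapSides_inr_eq_self_iff e f, ← swapSides_inr_eq_self_iff e' f', h]
  obtain rfl : e = e' := Equiv.ext fun i => Subtype.ext <| inr_injective <| by
    rw [← swapSides_inl_coe e f, ← swapSides_inl_coe e' f', h]
  obtain rfl : f = f' := Equiv.ext fun j => Subtype.ext <| inl_injective <| by
    rw [← swapSides_inr_coe e f, ← swapSides_inr_coe e f', h]
  rfl

lemma exists_swapSides_eq [Fintype α] [Fintype β] (σ : Perm (α ⊕ β))
    (hl : ∀ i, σ (inl i) = inl i ∨ ∃ j, σ (inl i) = inr j)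
    (hr : ∀ j, σ (inr j) = inr j ∨ ∃ i, σ (inr j) = inl i) :
    ∃ (S : Finset α) (T : Finset β) (e : S ≃ T) (f : T ≃ S), swapSides e f = σ := by
  set S : Finset α := {i | σ (inl i) ≠ inl i}
  set T : Finset β := {j | σ (inr j) ≠ inr j}
  have hS : ∀ i, i ∈ S ↔ σ (inl i) ≠ inl i := by simp [S]
  have hT : ∀ j, j ∈ T ↔ σ (inr j) ≠ inr j := by simp [T]
  have hST : ∀ i ∈ S, ∃ j ∈ T, σ (inl i) = inr j := fun i hi => by
    obtain ⟨j, hj⟩ := (hl i).resolve_left ((hS i).1 hi)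
    refine ⟨j, (hT j).2 fun hfix => ?_, hj⟩
    exact inl_ne_inr (σ.injective (hj.trans hfix.symm))
  have hTS : ∀ j ∈ T, ∃ i ∈ S, σ (inr j) = inl i := fun j hj => by
    obtain ⟨i, hi⟩ := (hr j).resolve_left ((hT j).1 hj)
    refine ⟨i, (hS i).2 fun hfix => ?_, hi⟩
    exact inr_ne_inl (σ.injective (hi.trans hfix.symm))
  have hTS' : ∀ j ∈ T, ∃ i ∈ S, σ (inl i) = inr j := fun j hj => by
    obtain ⟨i, hi⟩ := exists_apply_inl_eq_inr hr ((hT j).1 hj)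
    exact ⟨i, (hS i).2 (hi ▸ inr_ne_inl), hi⟩
  have hST' : ∀ i ∈ S, ∃ j ∈ T, σ (inr j) = inl i := fun i hi => by
    obtain ⟨j, hj⟩ := exists_apply_inr_eq_inl hl ((hS i).1 hi)
    exact ⟨j, (hT j).2 (hj ▸ inl_ne_inr), hj⟩
  obtain ⟨e, he⟩ := exists_equiv_of_forall_exists (σ.injective.comp inl_injective) inr_injective
    hST hTS'
  obtain ⟨f, hf⟩ := exists_equiv_of_forall_exists (σ.injective.comp inr_injective) inl_injective
    hTS hST'
  refine ⟨S, T, e, f, Equiv.ext ?_⟩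
  rintro (i | j)
  · by_cases hi : i ∈ S
    · exact (swapSides_inl_coe e f ⟨i, hi⟩).trans (he ⟨i, hi⟩).symm
    · rw [swapSides_inl, dif_neg hi, not_not.1 (mt (hS i).2 hi)]
  · by_cases hj : j ∈ T
    · exact (swapSides_inr_coe e f ⟨j, hj⟩).trans (hf ⟨j, hj⟩).symm
    · rw [swapSides_inr, dif_neg hj, not_not.1 (mt (hT j).2 hj)]

end Equiv.Perm

abbrev Matchings (r : α → β → Prop) (S : Finset α) (T : Finset β) : Type _ :=
  {e : S ≃ T // ∀ i : S, r i (e i)}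

def matchingsFlipEquiv (r : α → β → Prop) (S : Finset α) (T : Finset β) :
    Matchings (flip r) T S ≃ Matchings r S T where
  toFun f := ⟨f.1.symm, fun i => by simpa [flip] using f.2 (f.1.symm i)⟩
  invFun e := ⟨e.1.symm, fun j => by simpa [flip] using e.2 (e.1.symm j)⟩
  left_inv _ := rfl
  right_inv _ := rfl

namespace SimpleGraph

open Equiv Perm

def perms {V : Type*} (G : SimpleGraph V) : Set (Perm V) := {σ | ∀ v, σ v = v ∨ G.Adj v (σ v)}

variable {G : SimpleGraph (α ⊕ β)} {r : α → β → Prop}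
  (hG : ∀ v w, G.Adj v w ↔
    ∃ i j, ((v = inl i ∧ w = inr j) ∨ (v = inr j ∧ w = inl i)) ∧ r i j)
include hG

lemma adj_inl_iff (i : α) (w : α ⊕ β) : G.Adj (inl i) w ↔ ∃ j, w = inr j ∧ r i j := by
  simp [hG]

lemma adj_inr_iff (j : β) (w : α ⊕ β) : G.Adj (inr j) w ↔ ∃ i, w = inl i ∧ r i j := by
  simp [hG]

variable [DecidableEq α] [DecidableEq β]

lemma swapSides_mem_perms_iff {S : Finset α} {T : Finset β} (e : S ≃ T) (f : T ≃ S) :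
    swapSides e f ∈ G.perms ↔ (∀ i : S, r i (e i)) ∧ ∀ j : T, r (f j) j := by
  refine ⟨fun h => ⟨fun i => ?_, fun j => ?_⟩, fun ⟨he, hf⟩ => ?_⟩
  · have := (h (inl i)).resolve_left (by simp)
    simpa [swapSides_inl_coe, adj_inl_iff hG] using this
  · have := (h (inr j)).resolve_left (by simp)
    simpa [swapSides_inr_coe, adj_inr_iff hG] using this
  · rintro (i | j)
    · by_cases hi : i ∈ S
      · exact .inr <| by simpa [hi, adj_inl_iff hG] using he ⟨i, hi⟩
      · exact .inl <| by simp [hi]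
    · by_cases hj : j ∈ T
      · exact .inr <| by simpa [hj, adj_inr_iff hG] using hf ⟨j, hj⟩
      · exact .inl <| by simp [hj]

lemma exists_swapSides_eq_of_mem_perms [Fintype α] [Fintype β] {σ : Perm (α ⊕ β)}
    (hσ : σ ∈ G.perms) :
    ∃ (S : Finset α) (T : Finset β) (e : S ≃ T) (f : T ≃ S), swapSides e f = σ := by
  refine exists_swapSides_eq σ (fun i => ?_) (fun j => ?_)
  · exact (hσ (inl i)).imp_right fun h => by
      obtain ⟨j, hj, -⟩ := (adj_inl_iff hG i _).1 h
      exact ⟨j, hj⟩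
  · exact (hσ (inr j)).imp_right fun h => by
      obtain ⟨i, hi, -⟩ := (adj_inr_iff hG j _).1 h
      exact ⟨i, hi⟩

noncomputable def matchingPairsEquivPerms [Fintype α] [Fintype β] :
    (Σ (S : Finset α) (T : Finset β), Matchings r S T × Matchings (flip r) T S) ≃ G.perms :=
  .ofBijective (fun d => ⟨swapSides d.2.2.1.1 d.2.2.2.1,
      (swapSides_mem_perms_iff hG _ _).2 ⟨d.2.2.1.2, d.2.2.2.2⟩⟩) <| by
    refine ⟨?_, ?_⟩
    · rintro ⟨S, T, ⟨e, he⟩, ⟨f, hf⟩⟩ ⟨S', T', ⟨e', he'⟩, ⟨f', hf'⟩⟩ h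
      cases swapSides_injective (a₁ := ⟨S, T, e, f⟩) (a₂ := ⟨S', T', e', f'⟩)
        (congrArg Subtype.val h)
      rfl
    · rintro ⟨σ, hσ⟩
      obtain ⟨S, T, e, f, rfl⟩ := exists_swapSides_eq_of_mem_perms hG hσ
      obtain ⟨he, hf⟩ := (swapSides_mem_perms_iff hG e f).1 hσ
      exact ⟨⟨S, T, ⟨e, he⟩, ⟨f, hf⟩⟩, rfl⟩

lemma card_perms [Fintype α] [Fintype β] :
    Nat.card G.perms = ∑ S : Finset α, ∑ T : Finset β, Nat.card (Matchings r S T) ^ 2 := by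
  rw [← Nat.card_congr (matchingPairsEquivPerms hG), Nat.card_sigma]
  simp_rw [Nat.card_sigma, Nat.card_prod, Nat.card_congr (matchingsFlipEquiv r _ _), sq]

end SimpleGraph

section Permanent

variable {n : ℕ} {M : Matrix (Fin n) (Fin n) ℕ}

lemma subPer_eq_card_matchings (h01 : ∀ i j, M i j = 0 ∨ M i j = 1) (S T : Finset (Fin n)) :
    subPer M S T = Nat.card (Matchings (fun i j => M i j = 1) S T) := by
  classical
  rw [subPer, Nat.card_eq_fintype_card, Fintype.card_subtype, card_filter]
  refine sum_congr rfl fun e _ => ?_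
  rw [← Fintype.prod_boole]
  refine prod_congr rfl fun i _ => ?_
  rcases h01 i (e i) with h | h <;> simp [h]

lemma subPer_eq_zero_of_card_ne (M : Matrix (Fin n) (Fin n) ℕ) {S T : Finset (Fin n)}
    (h : S.card ≠ T.card) : subPer M S T = 0 := by
  have : IsEmpty (S ≃ T) := ⟨fun e => h (by simpa using Fintype.card_congr e)⟩
  rw [subPer, univ_eq_empty, sum_empty]

end Permanent

/-- For an undirected bipartite graph on `[n] ⊔ [n]` with biadjacency matrix `M`, the number
of permutations on the graph equals `∑_{S,S' ⊆ [n], |S|=|S'|} per(M(S,S'))²`. -/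
theorem stmt_12 (n : ℕ) (M : Matrix (Fin n) (Fin n) ℕ)
    (h01 : ∀ i j, M i j = 0 ∨ M i j = 1)
    (G : SimpleGraph (Fin n ⊕ Fin n))
    (hG : ∀ v w, G.Adj v w ↔
      ∃ i j, ((v = Sum.inl i ∧ w = Sum.inr j) ∨ (v = Sum.inr j ∧ w = Sum.inl i)) ∧ M i j = 1) :
    {σ : Equiv.Perm (Fin n ⊕ Fin n) | ∀ v, σ v = v ∨ G.Adj v (σ v)}.ncard =
      ∑ S ∈ (univ : Finset (Fin n)).powerset,
        ∑ S' ∈ (univ : Finset (Fin n)).powerset.filter (fun S' => S'.card = S.card),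
          (subPer M S S') ^ 2 := by
  rw [← Nat.card_coe_set_eq, powerset_univ]
  change Nat.card G.perms = _
  rw [SimpleGraph.card_perms hG]
  refine sum_congr rfl fun S _ => ?_
  rw [sum_filter_of_ne fun T _ hT => ?_]
  · simp only [subPer_eq_card_matchings h01]
  · by_contra hne
    exact hT (by rw [subPer_eq_zero_of_card_ne M (Ne.symm hne), zero_pow two_ne_zero])
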